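/- arXiv:0710.4605 — 5 statements merged into one kernel-verified Lean document; each statement's English description precedes it below -/
import Mathlib

section
/- Let p be a prime and let 1 ≤ m' ≤ m < n be integers. Then every value attained by the Nathanson height on m-dimensional subspaces of (ℤ/pℤ)^n is also attained on m'-dimensional subspaces; that is, {h_p(V) : V an m-dimensional subspace of (ℤ/pℤ)^n} ⊆ {h_p(W) : W an m'-dimensional subspace of (ℤ/pℤ)^n}. -/
/-- Nathanson height of a subspace `V ⊆ (ℤ/pℤ)^n`. -/
noncomputable def nheight {p n : ℕ} (V : Submodule (ZMod p) (Fin n → ZMod p)) : ℕ :=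
  sInf {k : ℕ | ∃ v ∈ V, v ≠ 0 ∧ k = ∑ i, (v i).val}

/-!
Take a vector `v` realizing the height of `V` and a subspace `W` with `span {v} ≤ W ≤ V` of the
prescribed dimension. Since `v ∈ W`, the height of `W` is at most that of `V`; since `W ≤ V`, it is
at least that of `V`.
-/

open Module

theorem Submodule.exists_le_le_finrank_eq {K V : Type*} [DivisionRing K] [AddCommGroup V]
    [Module K V] [Module.Finite K V] {U X : Submodule K V} (hUX : U ≤ X) {d : ℕ}
    (hU : finrank K U ≤ d) (hX : d ≤ finrank K X) :
    ∃ W : Submodule K V, U ≤ W ∧ W ≤ X ∧ finrank K W = d := by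
  induction d, hU using Nat.le_induction with
  | base => exact ⟨U, le_rfl, hUX, rfl⟩
  | succ d _ ih =>
    obtain ⟨W, hUW, hWX, hWd⟩ := ih (by omega)
    have hWX' : W < X := lt_of_le_of_ne hWX fun h => by subst h; omega
    obtain ⟨v, hvX, hvW⟩ := SetLike.exists_of_lt hWX'
    refine ⟨W ⊔ Submodule.span K {v}, hUW.trans le_sup_left, ?_, ?_⟩
    · exact sup_le hWX ((Submodule.span_singleton_le_iff_mem _ _).mpr hvX)
    · rw [Submodule.finrank_sup_span_singleton hvW, hWd]

section NathansonHeight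

variable {p n : ℕ}

theorem nheight_le_of_mem {V : Submodule (ZMod p) (Fin n → ZMod p)} {v : Fin n → ZMod p}
    (hv : v ∈ V) (hv0 : v ≠ 0) : nheight V ≤ ∑ i, (v i).val :=
  Nat.sInf_le ⟨v, hv, hv0, rfl⟩

theorem exists_nheight_eq {V : Submodule (ZMod p) (Fin n → ZMod p)} (hV : V ≠ ⊥) :
    ∃ v ∈ V, v ≠ 0 ∧ nheight V = ∑ i, (v i).val := by
  obtain ⟨v, hv, hv0⟩ := Submodule.exists_mem_ne_zero_of_ne_bot hV
  exact Nat.sInf_mem (s := {k | ∃ v ∈ V, v ≠ 0 ∧ k = ∑ i, (v i).val}) ⟨_, v, hv, hv0, rfl⟩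

theorem nheight_le_nheight_of_le {V W : Submodule (ZMod p) (Fin n → ZMod p)} (hWV : W ≤ V)
    (hW : W ≠ ⊥) : nheight V ≤ nheight W := by
  obtain ⟨w, hw, hw0, hWw⟩ := exists_nheight_eq hW
  exact hWw ▸ nheight_le_of_mem (hWV hw) hw0

theorem nheight_eq_of_le_of_mem {V W : Submodule (ZMod p) (Fin n → ZMod p)}
    {v : Fin n → ZMod p} (hWV : W ≤ V) (hv : v ∈ W) (hv0 : v ≠ 0)
    (hVv : nheight V = ∑ i, (v i).val) : nheight W = nheight V :=
  le_antisymm (hVv ▸ nheight_le_of_mem hv hv0)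
    (nheight_le_nheight_of_le hWV fun hW => hv0 (by simpa [hW] using hv))

end NathansonHeight

theorem height_values_dim_monotone_general (p n m m' : ℕ) (hp : p.Prime)
    (h1 : 1 ≤ m') (h2 : m' ≤ m) :
    {k : ℕ | ∃ V : Submodule (ZMod p) (Fin n → ZMod p),
        Module.finrank (ZMod p) V = m ∧ nheight V = k} ⊆
    {k : ℕ | ∃ W : Submodule (ZMod p) (Fin n → ZMod p),
        Module.finrank (ZMod p) W = m' ∧ nheight W = k} := by
  have : Fact p.Prime := ⟨hp⟩
  rintro k ⟨V, hVm, rfl⟩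
  have hV : V ≠ ⊥ := fun h => by rw [h, finrank_bot] at hVm; omega
  obtain ⟨v, hvV, hv0, hVv⟩ := exists_nheight_eq hV
  have hspan : finrank (ZMod p) (Submodule.span (ZMod p) {v}) = 1 := finrank_span_singleton hv0
  obtain ⟨W, hvW, hWV, hWm'⟩ := Submodule.exists_le_le_finrank_eq
    ((Submodule.span_singleton_le_iff_mem _ _).mpr hvV) (d := m') (by omega) (by omega)
  exact ⟨W, hWm', nheight_eq_of_le_of_mem hWV
    ((Submodule.span_singleton_le_iff_mem _ _).mp hvW) hv0 hVv⟩

theorem height_values_dim_monotone (p n m m' : ℕ) (hp : p.Prime)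
    (h1 : 1 ≤ m') (h2 : m' ≤ m) (h3 : m < n) :
    {k : ℕ | ∃ V : Submodule (ZMod p) (Fin n → ZMod p),
        Module.finrank (ZMod p) V = m ∧ nheight V = k} ⊆
    {k : ℕ | ∃ W : Submodule (ZMod p) (Fin n → ZMod p),
        Module.finrank (ZMod p) W = m' ∧ nheight W = k} :=
  height_values_dim_monotone_general p n m m' hp h1 h2
end

section
/- Let p be a prime, let 1 ≤ m < n, let M be an m × n matrix over ℤ/pℤ of rank m, let V = ker M (so V is a subspace of (ℤ/pℤ)^n of codimension m), and let A ⊆ (ℤ/pℤ)^m be the set of columns of M. Then h^c(A) ≤ h_p(V); moreover, if h^c(A) < p, then h^c(A) = h_p(V). -/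
open scoped Pointwise

/-- `iterSum A k` is the `k`-fold sumset `A + ⋯ + A` (with `iterSum A 0 = {0}`). -/
def iterSum {G : Type*} [AddCommMonoid G] (A : Set G) : ℕ → Set G
  | 0 => {0}
  | k + 1 => iterSum A k + A

/-- The coheight of `A`: the least positive `k` with `0 ∈ A + ⋯ + A` (`k` copies). -/
noncomputable def coheight {G : Type*} [AddCommMonoid G] (A : Set G) : ℕ :=
  sInf {k : ℕ | 0 < k ∧ (0 : G) ∈ iterSum A k}

/-!
A nonzero kernel vector `v` is a relation `∑ⱼ (vⱼ).val • colⱼ = 0`, so it writes `0` as a sum of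
`h_p(v)` columns of `M`. Conversely, writing `0` as a sum of `k < p` columns, the multiplicities of
the columns are all below `p`, hence form a nonzero kernel vector of height exactly `k`. The kernel
is nonzero because `m < n`.
-/

open Finset Matrix

section Sumset

variable {G : Type*} [AddCommMonoid G]

theorem iterSum_eq_nsmul (A : Set G) (k : ℕ) : iterSum A k = k • A := by
  induction k with
  | zero => rfl
  | succ k ih => rw [iterSum, ih, succ_nsmul]

theorem sum_nsmul_mem_nsmul_range {ι : Type*} [Fintype ι] (a : ι → G) (c : ι → ℕ) :
    ∑ j, c j • a j ∈ (∑ j, c j) • Set.range a := by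
  rw [← Finset.sum_nsmul_assoc, Set.mem_fintype_sum]
  exact ⟨fun j => c j • a j, fun j => Set.nsmul_mem_nsmul (Set.mem_range_self j), rfl⟩

theorem exists_sum_nsmul_eq_of_mem_nsmul_range {ι : Type*} [Fintype ι] [DecidableEq ι]
    {a : ι → G} {k : ℕ} {x : G} (hx : x ∈ k • Set.range a) :
    ∃ c : ι → ℕ, ∑ j, c j = k ∧ ∑ j, c j • a j = x := by
  obtain ⟨f, hf, rfl⟩ := Set.mem_nsmul_iff_sum.mp hx
  choose g hg using hf
  refine ⟨fun j => #{i | g i = j}, ?_, ?_⟩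
  · simpa using Finset.sum_fiberwise' univ g (fun _ => (1 : ℕ))
  · simp_rw [← hg, ← Finset.sum_fiberwise' univ g a, Finset.sum_const]

end Sumset

theorem ZMod.sum_val_eq_zero_iff {p : ℕ} {κ : Type*} [Fintype κ] (v : κ → ZMod p) :
    ∑ j, (v j).val = 0 ↔ v = 0 := by
  simp [Finset.sum_eq_zero_iff, funext_iff]

section ZModMatrix

variable {p : ℕ} [NeZero p] {ι κ : Type*} [Fintype κ]

theorem ZMod.val_nsmul_eq_smul {E : Type*} [AddCommMonoid E] [Module (ZMod p) E] (a : ZMod p)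
    (x : E) : a.val • x = a • x := by
  rw [← Nat.cast_smul_eq_nsmul (ZMod p), ZMod.natCast_zmod_val]

theorem Matrix.mulVec_eq_sum_val_nsmul_col (M : Matrix ι κ (ZMod p)) (v : κ → ZMod p) :
    M *ᵥ v = ∑ j, (v j).val • fun i => M i j := by
  simp_rw [ZMod.val_nsmul_eq_smul]
  ext i
  simp [mulVec, dotProduct, mul_comm]

theorem zero_mem_iterSum_cols_of_mulVec_eq_zero {M : Matrix ι κ (ZMod p)} {v : κ → ZMod p}
    (hv : M *ᵥ v = 0) :
    (0 : ι → ZMod p) ∈ iterSum (Set.range fun j i => M i j) (∑ j, (v j).val) := by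
  rw [iterSum_eq_nsmul, ← hv, M.mulVec_eq_sum_val_nsmul_col]
  exact sum_nsmul_mem_nsmul_range _ _

theorem exists_mulVec_eq_zero_of_zero_mem_iterSum_cols {M : Matrix ι κ (ZMod p)} {k : ℕ}
    (h : (0 : ι → ZMod p) ∈ iterSum (Set.range fun j i => M i j) k) (hk : k < p) :
    ∃ v, M *ᵥ v = 0 ∧ ∑ j, (v j).val = k := by
  classical
  rw [iterSum_eq_nsmul] at h
  obtain ⟨c, hc, hsum⟩ := exists_sum_nsmul_eq_of_mem_nsmul_range h
  have hval (j : κ) : (c j : ZMod p).val = c j :=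
    ZMod.val_cast_of_lt <|
      (single_le_sum (fun _ _ => Nat.zero_le _) (mem_univ j)).trans_lt (hc ▸ hk)
  refine ⟨fun j => c j, ?_, by simp only [hval, hc]⟩
  rw [M.mulVec_eq_sum_val_nsmul_col]
  simp only [hval, hsum]

end ZModMatrix

theorem coheight_le_height_of_kernel_general (p m n : ℕ) (hp : p.Prime) (h2 : m < n)
    (M : Matrix (Fin m) (Fin n) (ZMod p))
    (V : Submodule (ZMod p) (Fin n → ZMod p)) (hV : V = LinearMap.ker M.mulVecLin)
    (A : Set (Fin m → ZMod p)) (hA : A = {c | ∃ j : Fin n, c = fun i => M i j}) :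
    coheight A ≤ nheight V ∧ (coheight A < p → coheight A = nheight V) := by
  have : Fact p.Prime := ⟨hp⟩
  have hcols : A = Set.range fun j i => M i j := by
    rw [hA]
    ext
    simp [eq_comm]
  subst hcols hV
  set heights := {k : ℕ | ∃ v ∈ LinearMap.ker M.mulVecLin, v ≠ 0 ∧ k = ∑ i, (v i).val}
  have hsub :
      heights ⊆ {k | 0 < k ∧ (0 : Fin m → ZMod p) ∈ iterSum (Set.range fun j i => M i j) k} := by
    rintro _ ⟨v, hv, hv0, rfl⟩
    exact ⟨Nat.pos_of_ne_zero ((ZMod.sum_val_eq_zero_iff v).not.mpr hv0),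
      zero_mem_iterSum_cols_of_mulVec_eq_zero hv⟩
  have hne : heights.Nonempty := by
    obtain ⟨v, hv, hv0⟩ := Submodule.exists_mem_ne_zero_of_ne_bot
      (LinearMap.ker_ne_bot_of_finrank_lt (f := M.mulVecLin) (by simpa using h2))
    exact ⟨_, v, hv, hv0, rfl⟩
  have hle : coheight _ ≤ nheight _ := csInf_le_csInf (OrderBot.bddBelow _) hne hsub
  refine ⟨hle, fun hlt => hle.antisymm (Nat.sInf_le ?_)⟩
  obtain ⟨hpos, hmem⟩ := Nat.sInf_mem (hne.mono hsub)
  obtain ⟨v, hv, hsum⟩ := exists_mulVec_eq_zero_of_zero_mem_iterSum_cols hmem hlt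
  exact ⟨v, hv, (ZMod.sum_val_eq_zero_iff v).not.mp (hsum ▸ hpos.ne'), hsum.symm⟩

theorem coheight_le_height_of_kernel (p m n : ℕ) (hp : p.Prime) (h1 : 1 ≤ m) (h2 : m < n)
    (M : Matrix (Fin m) (Fin n) (ZMod p)) (hM : M.rank = m)
    (V : Submodule (ZMod p) (Fin n → ZMod p)) (hV : V = LinearMap.ker M.mulVecLin)
    (A : Set (Fin m → ZMod p)) (hA : A = {c | ∃ j : Fin n, c = fun i => M i j}) :
    coheight A ≤ nheight V ∧ (coheight A < p → coheight A = nheight V) :=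
  coheight_le_height_of_kernel_general p m n hp h2 M V hV A hA
end

section
/- Let p be a prime, let n > 1, and let ā₁, …, āₙ ∈ ℤ/pℤ. Then there exists an integer k with 1 ≤ k ≤ p−1 such that |k·āᵢ|_p ≤ ⌈p^((n−1)/n)⌉ for every 1 ≤ i ≤ n. -/
/-!
Dirichlet's box principle. Put `M = ⌈p ^ ((n - 1) / n)⌉`. The `(M + 1) ^ n` vectors with
coordinates in `{0, …, M}` outnumber the `p ^ (n - 1)` cosets of the line through `a` in
`(ℤ/pℤ)ⁿ`, so two of them, `x ≠ y`, satisfy `x - y = k • a` with `k ≠ 0`; then every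
`k * aᵢ` is represented by the integer `xᵢ - yᵢ`, of absolute value at most `M`.
The box embeds in `(ℤ/pℤ)ⁿ` only when `M < p`; otherwise `k = 1` already works,
as `|z|_p ≤ p / 2` always.
-/

open Submodule in
theorem exists_sub_eq_smul_of_card_lt {K V ι : Type*} [Field K] [AddCommGroup V]
    [Module K V] [Finite V] {a : V} (ha : a ≠ 0) {f : ι → V} (hf : Function.Injective f)
    (hcard : Nat.card V < Nat.card K * Nat.card ι) :
    ∃ k : K, k ≠ 0 ∧ ∃ x y, f x - f y = k • a := by
  have hline : Nat.card (K ∙ a) = Nat.card K :=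
    (Nat.card_congr (LinearEquiv.toSpanNonzeroSingleton K V a ha).toEquiv).symm
  obtain ⟨x, y, hxy, hmk⟩ : ∃ x y, x ≠ y ∧ (K ∙ a).mkQ (f x) = (K ∙ a).mkQ (f y) := by
    by_contra! hinj
    have : Finite (V ⧸ K ∙ a) := Finite.of_surjective _ (K ∙ a).mkQ_surjective
    have := Nat.card_le_card_of_injective _ fun x y h => by_contra fun hne => hinj x y hne h
    rw [card_eq_card_quotient_mul_card (K ∙ a), hline] at hcard
    exact (Nat.mul_le_mul_left _ this).not_gt hcard
  obtain ⟨k, hk⟩ := mem_span_singleton.mp ((Submodule.Quotient.eq _).mp hmk)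
  refine ⟨k, ?_, x, y, hk.symm⟩
  rintro rfl
  exact hxy (hf (sub_eq_zero.mp (by rw [← hk, zero_smul])))

theorem ZMod.natAbs_valMinAbs_le_natAbs {p : ℕ} [NeZero p] {z : ZMod p} {c : ℤ}
    (hc : (c : ZMod p) = z) : z.valMinAbs.natAbs ≤ c.natAbs :=
  ZMod.natAbs_min_of_le_div_two p _ _ (by rw [ZMod.coe_valMinAbs, hc]) z.natAbs_valMinAbs_le

theorem Real.rpow_sub_one_div_pow {x : ℝ} (hx : 0 ≤ x) {n : ℕ} (hn : n ≠ 0) :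
    (x ^ (((n : ℝ) - 1) / n)) ^ n = x ^ (n - 1) := by
  rw [← Real.rpow_natCast, ← Real.rpow_mul hx, div_mul_cancel₀ _ (by positivity),
    ← Real.rpow_natCast, Nat.cast_sub (Nat.one_le_iff_ne_zero.mpr hn), Nat.cast_one]

theorem pow_lt_mul_ceil_rpow_add_one_pow {p : ℕ} (hp : 1 < p) (n : ℕ) :
    p ^ n < p * (⌈(p : ℝ) ^ (((n : ℝ) - 1) / n)⌉₊ + 1) ^ n := by
  rcases eq_or_ne n 0 with rfl | hn
  · simpa using hp
  set M := ⌈(p : ℝ) ^ (((n : ℝ) - 1) / n)⌉₊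
  have hM : p ^ (n - 1) ≤ M ^ n := by
    rw [← Nat.cast_le (α := ℝ), Nat.cast_pow, Nat.cast_pow,
      ← Real.rpow_sub_one_div_pow p.cast_nonneg hn]
    exact pow_le_pow_left₀ (by positivity) (Nat.le_ceil _) n
  calc p ^ n = p * p ^ (n - 1) := by rw [← pow_succ', Nat.sub_add_cancel (by omega)]
    _ ≤ p * M ^ n := Nat.mul_le_mul_left p hM
    _ < p * (M + 1) ^ n := by gcongr; omega

theorem ZMod.exists_ne_zero_forall_natAbs_valMinAbs_mul_le {p : ℕ} [Fact p.Prime] {ι : Type*}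
    [Fintype ι] (a : ι → ZMod p) {M : ℕ}
    (hM : p ^ Fintype.card ι < p * (M + 1) ^ Fintype.card ι) :
    ∃ k : ZMod p, k ≠ 0 ∧ ∀ i, (k * a i).valMinAbs.natAbs ≤ M := by
  by_cases htriv : a = 0 ∨ p ≤ M
  · refine ⟨1, one_ne_zero, fun i => ?_⟩
    rcases htriv with rfl | hpM
    · simp
    · exact (natAbs_valMinAbs_le _).trans (by omega)
  obtain ⟨ha, hMp⟩ := not_or.mp htriv
  rw [not_le] at hMp
  let box : (ι → Fin (M + 1)) → ι → ZMod p := fun x i => (x i : ℕ)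
  have hbox : Function.Injective box := fun x y h => funext fun i => Fin.ext <| by
    simpa [box, val_natCast_of_lt ((x i).isLt.trans_le hMp),
      val_natCast_of_lt ((y i).isLt.trans_le hMp)] using congrArg val (congrFun h i)
  obtain ⟨k, hk, x, y, hxy⟩ := exists_sub_eq_smul_of_card_lt (K := ZMod p) ha hbox (by
    simpa only [Nat.card_fun, Nat.card_eq_fintype_card, Fintype.card_fin, card] using hM)
  refine ⟨k, hk, fun i => ?_⟩
  have hki : (((x i : ℕ) : ℤ) - (y i : ℕ) : ℤ) = k * a i := by
    simpa [box] using congrFun hxy i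
  calc (k * a i).valMinAbs.natAbs ≤ (((x i : ℕ) : ℤ) - (y i : ℕ)).natAbs :=
        natAbs_valMinAbs_le_natAbs hki
    _ ≤ M := by omega

theorem small_multiple_exists_general (p n : ℕ) (hp : p.Prime)
    (a : Fin n → ZMod p) :
    ∃ k : ℕ, 1 ≤ k ∧ k ≤ p - 1 ∧ ∀ i : Fin n,
      ((min (((k : ZMod p) * a i).val) (p - ((k : ZMod p) * a i).val) : ℕ) : ℤ) ≤
        ⌈(p : ℝ) ^ (((n : ℝ) - 1) / n)⌉ := by
  have : Fact p.Prime := ⟨hp⟩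
  obtain ⟨k, hk, hsmall⟩ := ZMod.exists_ne_zero_forall_natAbs_valMinAbs_mul_le a
    (by simpa using pow_lt_mul_ceil_rpow_add_one_pow hp.one_lt n)
  refine ⟨k.val, Nat.one_le_iff_ne_zero.mpr ((ZMod.val_ne_zero k).mpr hk),
    Nat.le_sub_one_of_lt k.val_lt, fun i => ?_⟩
  rw [ZMod.natCast_zmod_val, ← ZMod.valMinAbs_natAbs_eq_min,
    ← Int.natCast_ceil_eq_ceil (by positivity)]
  exact_mod_cast hsmall i

theorem small_multiple_exists (p n : ℕ) (hp : p.Prime) (hn : 1 < n)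
    (a : Fin n → ZMod p) :
    ∃ k : ℕ, 1 ≤ k ∧ k ≤ p - 1 ∧ ∀ i : Fin n,
      ((min (((k : ZMod p) * a i).val) (p - ((k : ZMod p) * a i).val) : ℕ) : ℤ) ≤
        ⌈(p : ℝ) ^ (((n : ℝ) - 1) / n)⌉ :=
  small_multiple_exists_general p n hp a
end

section
/- Let a and b be integers, not both zero, and let g = gcd(a,b). If ab ≥ 0, then h_∞(a,b) = 0; if ab < 0, then h_∞(a,b) = min(g/|a|, g/|b|). -/
/-- `fx a x = liminf_{t → x} ∑ᵢ {aᵢ t}`, where `{y}` is the fractional part and the limit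
is over the punctured neighborhood of `x`. -/
noncomputable def fx {n : ℕ} (a : Fin n → ℤ) (x : ℝ) : ℝ :=
  Filter.liminf (fun t : ℝ => ∑ i, Int.fract ((a i : ℝ) * t)) (nhdsWithin x {x}ᶜ)

/-- `hinf a` is the minimum of `fx a x` over `x ∈ [0, 1)`. -/
noncomputable def hinf {n : ℕ} (a : Fin n → ℤ) : ℝ :=
  sInf (fx a '' Set.Ico (0 : ℝ) 1)

/-!
Write `F t = {a t} + {b t}`. The quantities involved are invariant under `t ↦ t + 1`, `t ↦ -t`
and under swapping `a` and `b`, so only the cases `a, b ≥ 0` and `a > 0 > b` matter.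
If `a, b ≥ 0` then `F t → 0` as `t → 0⁺`. If `a > 0 > b` and `a t ∉ ℤ`, the integer
`b ⌊a t⌋ - a ⌊b t⌋ = a {b t} + |b| {a t}` is a positive multiple of `g = gcd a b`,
whence `F t ≥ g / max a |b| = min (g / a) (g / |b|)`. Conversely, if `g = a u + b v` is a
Bézout relation, then just to the right of `x = v / a` the function `F` is affine with limit
`g / a` at `x`; the bound `g / |b|` follows by the symmetry `(a, b) ↦ (-b, -a)`.
-/

open Filter Topology Set Function

theorem tendsto_fract_mul_nhdsGT_zero {c : ℝ} (hc : 0 ≤ c) :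
    Tendsto (fun t => Int.fract (c * t)) (𝓝[>] 0) (𝓝 0) := by
  have hlin : Tendsto (c * ·) (𝓝[>] 0) (𝓝[≥] ((0 : ℤ) : ℝ)) := by
    refine tendsto_nhdsWithin_of_tendsto_nhds_of_eventually_within _ ?_ ?_
    · simpa using ((continuous_const_mul c).tendsto 0).mono_left nhdsWithin_le_nhds
    · filter_upwards [self_mem_nhdsWithin] with t (ht : 0 < t)
      simpa using mul_nonneg hc ht.le
  exact (tendsto_fract_right' 0).comp hlin

noncomputable def fractSum {n : ℕ} (a : Fin n → ℤ) (t : ℝ) : ℝ :=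
  ∑ i, Int.fract ((a i : ℝ) * t)

section FractSum

variable {n : ℕ} (a : Fin n → ℤ)

theorem fx_eq_liminf_fractSum (x : ℝ) : fx a x = liminf (fractSum a) (𝓝[≠] x) := rfl

theorem fractSum_nonneg (t : ℝ) : 0 ≤ fractSum a t :=
  Finset.sum_nonneg fun _ _ => Int.fract_nonneg _

theorem fractSum_le_card (t : ℝ) : fractSum a t ≤ n := by
  simpa [fractSum] using
    Finset.sum_le_sum fun i (_ : i ∈ Finset.univ) => (Int.fract_lt_one ((a i : ℝ) * t)).le

variable {a}

theorem le_fx_of_eventually_le {x c : ℝ} (h : ∀ᶠ t in 𝓝[≠] x, c ≤ fractSum a t) :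
    c ≤ fx a x :=
  le_liminf_of_le (isCoboundedUnder_ge_of_le _ (fractSum_le_card a)) h

theorem fx_nonneg (x : ℝ) : 0 ≤ fx a x :=
  le_fx_of_eventually_le (.of_forall (fractSum_nonneg a))

theorem fx_le_of_tendsto {x c : ℝ} {l : Filter ℝ} [l.NeBot] (hl : l ≤ 𝓝[≠] x)
    (h : Tendsto (fractSum a) l (𝓝 c)) : fx a x ≤ c :=
  h.liminf_eq ▸ liminf_le_liminf_of_le hl (isBoundedUnder_of ⟨0, fractSum_nonneg a⟩)
    h.isBoundedUnder_le.isCoboundedUnder_ge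

theorem fx_eq_of_fractSum_eq_comp {m : ℕ} {b : Fin m → ℤ} (e : ℝ ≃ₜ ℝ)
    (h : fractSum b = fractSum a ∘ e) (x : ℝ) : fx b x = fx a (e x) := by
  rw [fx_eq_liminf_fractSum, h, liminf_comp, e.map_punctured_nhds_eq]; rfl

theorem fx_periodic (a : Fin n → ℤ) : Periodic (fx a) 1 := fun x =>
  (fx_eq_of_fractSum_eq_comp (Homeomorph.addRight 1) (funext fun t => by
    simp [fractSum, mul_add]) x).symm

theorem fx_neg (x : ℝ) : fx (-a) x = fx a (-x) :=
  fx_eq_of_fractSum_eq_comp (Homeomorph.neg ℝ) (funext fun t => by simp [fractSum]) x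

theorem fx_comp_perm (σ : Equiv.Perm (Fin n)) : fx (a ∘ σ) = fx a :=
  funext <| fx_eq_of_fractSum_eq_comp (Homeomorph.refl ℝ) <| funext fun t =>
    Equiv.sum_comp σ fun i => Int.fract ((a i : ℝ) * t)

theorem hinf_eq_sInf_range (a : Fin n → ℤ) : hinf a = sInf (range (fx a)) := by
  refine congrArg sInf ((image_subset_range _ _).antisymm (range_subset_iff.2 fun x => ?_))
  obtain ⟨y, hy, hxy⟩ := (fx_periodic a).exists_mem_Ico₀ one_pos x
  exact ⟨y, hy, hxy.symm⟩

theorem hinf_neg (a : Fin n → ℤ) : hinf (-a) = hinf a := by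
  simp only [hinf_eq_sInf_range, funext (fx_neg (a := a))]
  exact congrArg sInf (neg_surjective.range_comp (fx a))

theorem hinf_comp_perm (σ : Equiv.Perm (Fin n)) : hinf (a ∘ σ) = hinf a := by
  rw [hinf_eq_sInf_range, hinf_eq_sInf_range, fx_comp_perm]

theorem hinf_le_fx (x : ℝ) : hinf a ≤ fx a x := by
  rw [hinf_eq_sInf_range]
  exact csInf_le ⟨0, forall_mem_range.2 fx_nonneg⟩ (mem_range_self x)

theorem fx_zero_eq_zero_of_nonneg (h : ∀ i, 0 ≤ a i) : fx a 0 = 0 := by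
  refine le_antisymm (fx_le_of_tendsto (nhdsGT_le_nhdsNE 0) ?_) (fx_nonneg 0)
  have hsum := tendsto_finsetSum Finset.univ fun i _ =>
    tendsto_fract_mul_nhdsGT_zero (Int.cast_nonneg (h i))
  rwa [Finset.sum_const_zero] at hsum

theorem hinf_eq_zero_of_nonneg (h : ∀ i, 0 ≤ a i) : hinf a = 0 := by
  rw [hinf_eq_sInf_range]
  exact IsLeast.csInf_eq ⟨⟨0, fx_zero_eq_zero_of_nonneg h⟩, forall_mem_range.2 fx_nonneg⟩

theorem hinf_eq_zero_of_nonpos (h : ∀ i, a i ≤ 0) : hinf a = 0 := by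
  rw [← hinf_neg, hinf_eq_zero_of_nonneg fun i => by simpa using h i]

end FractSum

theorem eventually_nhdsNE_notMem_range_intCast (y : ℝ) :
    ∀ᶠ s in 𝓝[≠] y, s ∉ range ((↑) : ℤ → ℝ) := by
  have hclosed := Int.isClosedEmbedding_coe_real
  exact disjoint_principal_right.1 <| isClosed_and_discrete_iff.1
    ⟨hclosed.isClosed_range, hclosed.isInducing.isDiscrete_range⟩ y

theorem eventually_fract_mul_ne_zero {c : ℝ} (hc : c ≠ 0) (x : ℝ) :
    ∀ᶠ t in 𝓝[≠] x, Int.fract (c * t) ≠ 0 := by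
  have hmap : map (c * ·) (𝓝[≠] x) = 𝓝[≠] (c * x) :=
    (Homeomorph.mulLeft₀ c hc).map_punctured_nhds_eq x
  have hnotint := eventually_nhdsNE_notMem_range_intCast (c * x)
  rw [← hmap, eventually_map] at hnotint
  simpa only [Ne, Int.fract_eq_zero_iff] using hnotint

theorem fractSum_pair (a b : ℤ) (t : ℝ) :
    fractSum ![a, b] t = Int.fract ((a : ℝ) * t) + Int.fract ((b : ℝ) * t) := by
  simp [fractSum, Fin.sum_univ_two]

theorem min_gcd_div_le_fract_add_fract {a b : ℤ} (ha : 0 < a) (hb : b < 0) {t : ℝ}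
    (ht : Int.fract ((a : ℝ) * t) ≠ 0) :
    min ((Int.gcd a b : ℝ) / a) ((Int.gcd a b : ℝ) / -b) ≤
      Int.fract ((a : ℝ) * t) + Int.fract ((b : ℝ) * t) := by
  set u := Int.fract ((a : ℝ) * t)
  set v := Int.fract ((b : ℝ) * t)
  have haR : (0 : ℝ) < a := Int.cast_pos.mpr ha
  have hbR : (b : ℝ) < 0 := Int.cast_lt_zero.mpr hb
  have hu : 0 < u := (Int.fract_nonneg _).lt_of_ne' ht
  have hv : 0 ≤ v := Int.fract_nonneg _
  set N : ℤ := b * ⌊(a : ℝ) * t⌋ - a * ⌊(b : ℝ) * t⌋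
  have hN : (N : ℝ) = a * v - b * u := by
    simp only [N, u, v, Int.fract]; push_cast; ring
  have hN_pos : 0 < N := by
    have : (0 : ℝ) < N := by rw [hN]; nlinarith
    exact_mod_cast this
  have hgN : (Int.gcd a b : ℝ) ≤ a * v - b * u := by
    rw [← hN]
    exact_mod_cast Int.le_of_dvd hN_pos <|
      dvd_sub (dvd_mul_of_dvd_left (Int.gcd_dvd_right a b) _)
        (dvd_mul_of_dvd_left (Int.gcd_dvd_left a b) _)
  rcases le_total (a : ℝ) (-b) with hab | hab
  · refine (min_le_right _ _).trans ((div_le_iff₀ (by linarith)).2 ?_)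
    nlinarith
  · refine (min_le_left _ _).trans ((div_le_iff₀ haR).2 ?_)
    nlinarith

theorem fx_pair_le_gcd_div {a b : ℤ} (ha : 0 < a) (hb : b < 0) :
    fx ![a, b] (Int.gcdB a b / a) ≤ (Int.gcd a b : ℝ) / a := by
  have haR : (0 : ℝ) < a := Int.cast_pos.mpr ha
  have hbR : (0 : ℝ) < -b := neg_pos.mpr (Int.cast_lt_zero.mpr hb)
  have hg : (0 : ℝ) < Int.gcd a b := Nat.cast_pos.mpr (Int.gcd_pos_of_ne_zero_left b ha.ne')
  have hga : (Int.gcd a b : ℝ) ≤ a := by exact_mod_cast Int.gcd_le_left b ha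
  have hbez : (Int.gcd a b : ℝ) = a * Int.gcdA a b + b * Int.gcdB a b := by
    exact_mod_cast Int.gcd_eq_gcd_ab a b
  set x : ℝ := Int.gcdB a b / a
  set g : ℝ := ((Int.gcd a b : ℕ) : ℝ)
  have hax : (a : ℝ) * x = Int.gcdB a b := by simp only [x]; field_simp
  have hbx : (b : ℝ) * x = g / a - Int.gcdA a b := by
    simp only [x]; field_simp; linear_combination -hbez
  set δ := min (1 / (a : ℝ)) (g / (a * -b))
  have hδa : δ ≤ 1 / a := min_le_left _ _
  have hδb : δ ≤ g / (a * -b) := min_le_right _ _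
  have hδ : 0 < δ := lt_min (by positivity) (by positivity)
  have haffine : ∀ t ∈ Ioo x (x + δ), g / a + (a + b) * (t - x) = fractSum ![a, b] t := by
    rintro t ⟨hxt, htδ⟩
    have hlt_a : (a : ℝ) * (t - x) < 1 := (lt_div_iff₀' haR).1 (by linarith)
    have hpos_b : 0 < g / a + b * (t - x) := by
      have : (a : ℝ) * -b * (t - x) < g := (lt_div_iff₀' (by positivity)).1 (by linarith)
      have : -b * (t - x) < g / a := (lt_div_iff₀' haR).2 (by linarith)
      linarith
    have hlt_b : g / a + b * (t - x) < 1 := by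
      have : g / a ≤ 1 := (div_le_one haR).2 hga
      nlinarith
    rw [fractSum_pair,
      Int.fract_eq_iff.2 ⟨by nlinarith, hlt_a, Int.gcdB a b, by linear_combination hax⟩,
      Int.fract_eq_iff.2 ⟨hpos_b.le, hlt_b, -Int.gcdA a b,
        by push_cast; linear_combination hbx⟩]
    ring
  have hlim : Tendsto (fun t : ℝ => g / a + (a + b) * (t - x)) (𝓝[>] x) (𝓝 (g / a)) := by
    refine tendsto_nhdsWithin_of_tendsto_nhds ?_
    simpa using (Continuous.tendsto (by fun_prop) x :
      Tendsto (fun t : ℝ => g / a + (a + b) * (t - x)) (𝓝 x) _)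
  refine fx_le_of_tendsto (nhdsGT_le_nhdsNE x) (hlim.congr' ?_)
  filter_upwards [Ioo_mem_nhdsGT (lt_add_of_pos_right x hδ)] with t ht using haffine t ht

theorem hinf_pair_of_pos_of_neg {a b : ℤ} (ha : 0 < a) (hb : b < 0) :
    hinf ![a, b] = min ((Int.gcd a b : ℝ) / |(a : ℝ)|) ((Int.gcd a b : ℝ) / |(b : ℝ)|) := by
  rw [abs_of_pos (Int.cast_pos.mpr ha), abs_of_neg (Int.cast_lt_zero.mpr hb)]
  have hswap : hinf ![-b, -a] = hinf ![a, b] := by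
    rw [← hinf_comp_perm (Equiv.swap 0 1), ← hinf_neg]
    congr 1
    ext i; fin_cases i <;> simp
  refine le_antisymm (le_min ((hinf_le_fx _).trans (fx_pair_le_gcd_div ha hb)) ?_) ?_
  · have hdual :=
      (hinf_le_fx _).trans (fx_pair_le_gcd_div (neg_pos.mpr hb) (neg_lt_zero.mpr ha))
    rwa [hswap, Int.gcd_neg, Int.neg_gcd, Int.gcd_comm, Int.cast_neg] at hdual
  · rw [hinf_eq_sInf_range]
    refine le_csInf (range_nonempty _) (forall_mem_range.2 fun x => le_fx_of_eventually_le ?_)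
    filter_upwards [eventually_fract_mul_ne_zero (Int.cast_ne_zero.mpr ha.ne') x] with t ht
    rw [fractSum_pair]
    exact min_gcd_div_le_fract_add_fract ha hb ht

theorem hinf_two_integers_general (a b : ℤ) :
    (0 ≤ a * b → hinf ![a, b] = 0) ∧
    (a * b < 0 → hinf ![a, b] =
      min ((Int.gcd a b : ℝ) / |(a : ℝ)|) ((Int.gcd a b : ℝ) / |(b : ℝ)|)) := by
  refine ⟨fun hab => ?_, fun hab => ?_⟩
  · rcases mul_nonneg_iff.1 hab with ⟨ha, hb⟩ | ⟨ha, hb⟩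
    · exact hinf_eq_zero_of_nonneg (Fin.forall_fin_two.2 ⟨ha, hb⟩)
    · exact hinf_eq_zero_of_nonpos (Fin.forall_fin_two.2 ⟨ha, hb⟩)
  · rcases mul_neg_iff.1 hab with ⟨ha, hb⟩ | ⟨ha, hb⟩
    · exact hinf_pair_of_pos_of_neg ha hb
    · rw [← hinf_neg]
      simpa using hinf_pair_of_pos_of_neg (neg_pos.mpr ha) (neg_lt_zero.mpr hb)

theorem hinf_two_integers (a b : ℤ) (hab : ¬(a = 0 ∧ b = 0)) :
    (0 ≤ a * b → hinf ![a, b] = 0) ∧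
    (a * b < 0 → hinf ![a, b] =
      min ((Int.gcd a b : ℝ) / |(a : ℝ)|) ((Int.gcd a b : ℝ) / |(b : ℝ)|)) :=
  hinf_two_integers_general a b
end

section
/- Let n ≥ 1 and let v₁, …, vₙ ∈ ℝⁿ be linearly independent vectors with Euclidean norm ‖vᵢ‖ ≤ 1 for each i. Then for every c ∈ ℝⁿ and every real r ≥ √n / 2, there exist integers k₁, …, kₙ such that ‖k₁v₁ + ⋯ + kₙvₙ − c‖ ≤ r; that is, every closed ball in ℝⁿ of radius at least √n / 2 contains a point of the lattice generated by v₁, …, vₙ. -/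
open Submodule RealInnerProductSpace

lemma lattice_aux : ∀ (m : ℕ) {E : Type} [NormedAddCommGroup E] [InnerProductSpace ℝ E]
    (v : Fin m → E) (hv : ∀ i, ‖v i‖ ≤ 1) (c : E)
    (hc : c ∈ Submodule.span ℝ (Set.range v)),
    ∃ k : Fin m → ℤ, ‖(∑ i, (k i : ℝ) • v i) - c‖ ^ 2 ≤ m / 4 := by
  intro m
  induction m with
  | zero =>
    intro E _ _ v hv c hc
    have hc0 : c = 0 := by
      rw [Set.range_eq_empty v, Submodule.span_empty, Submodule.mem_bot] at hc
      exact hc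
    exact ⟨0, by simp [hc0]⟩
  | succ m ih =>
    intro E _ _ v hv c hc
    set W : Submodule ℝ E := Submodule.span ℝ (Set.range (v ∘ Fin.succ)) with hW
    have hfin : FiniteDimensional ℝ W :=
      FiniteDimensional.span_of_finite ℝ (Set.finite_range _)
    rw [mem_span_range_iff_exists_fun] at hc
    obtain ⟨a, ha⟩ := hc
    set p : E := (orthogonalProjection W (v 0) : E) with hp
    have hpW : p ∈ W := (orthogonalProjection W (v 0)).2
    set q : E := v 0 - p with hq
    have hqmem : q ∈ Wᗮ := W.sub_starProjection_mem_orthogonal (v 0)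
    have hqperp : ∀ w ∈ W, ⟪q, w⟫ = 0 := (Submodule.mem_orthogonal' W q).mp hqmem
    have hqnorm : ‖q‖ ≤ 1 := by
      have hortho : ⟪q, p⟫ = 0 := hqperp p hpW
      have hsq : ‖v 0‖ ^ 2 = ‖q‖ ^ 2 + 2 * ⟪q, p⟫ + ‖p‖ ^ 2 := by
        have hv0 : v 0 = q + p := by rw [hq]; abel
        rw [hv0, norm_add_sq_real]
      rw [hortho] at hsq
      nlinarith [hv 0, norm_nonneg (v 0), norm_nonneg q, norm_nonneg p, sq_nonneg ‖p‖]
    set k0 : ℤ := round (a 0) with hk0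
    set t : ℝ := a 0 - k0 with ht
    have htabs : |t| ≤ 1 / 2 := abs_sub_round (a 0)
    set w : E := ∑ i : Fin m, a i.succ • v i.succ with hw'
    have hwW : w ∈ W := by
      apply Submodule.sum_mem
      intro i _
      exact Submodule.smul_mem _ _ (Submodule.subset_span ⟨i, rfl⟩)
    set c' : E := t • p + w with hc'
    have hc'W : c' ∈ W := Submodule.add_mem _ (Submodule.smul_mem _ _ hpW) hwW
    obtain ⟨k', hk'⟩ := ih (v ∘ Fin.succ) (fun i => hv _) c' hc'W
    refine ⟨Fin.cons k0 k', ?_⟩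
    have hsum : (∑ i : Fin (m+1), ((Fin.cons k0 k' : Fin (m+1) → ℤ) i : ℝ) • v i) - c
        = ((∑ i : Fin m, (k' i : ℝ) • (v ∘ Fin.succ) i) - c') - t • q := by
      have hca : c = a 0 • v 0 + w := by
        rw [← ha, Fin.sum_univ_succ]
      rw [Fin.sum_univ_succ, hca, hc', hq]
      simp only [Fin.cons_zero, Fin.cons_succ, Function.comp]
      rw [ht]
      module
    rw [hsum]
    set x : E := (∑ i : Fin m, (k' i : ℝ) • (v ∘ Fin.succ) i) - c' with hx
    have hxW : x ∈ W := by
      apply Submodule.sub_mem _ _ hc'W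
      apply Submodule.sum_mem
      intro i _
      exact Submodule.smul_mem _ _ (Submodule.subset_span ⟨i, rfl⟩)
    have hinner : ⟪x, -(t • q)⟫ = 0 := by
      rw [inner_neg_right, inner_smul_right, real_inner_comm, hqperp x hxW]
      ring
    have hpyth : ‖x - t • q‖ ^ 2 = ‖x‖ ^ 2 + ‖t • q‖ ^ 2 := by
      have h := norm_add_sq_real x (-(t • q))
      rw [hinner] at h
      simpa [sub_eq_add_neg] using h
    rw [hpyth]
    have h2 : ‖t • q‖ ^ 2 ≤ 1 / 4 := by
      rw [norm_smul, mul_pow]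
      have h1 : |t| ^ 2 ≤ (1/2 : ℝ) ^ 2 := by
        nlinarith [abs_nonneg t, htabs]
      have h3 : ‖q‖ ^ 2 ≤ 1 := by nlinarith [norm_nonneg q]
      calc ‖t‖ ^ 2 * ‖q‖ ^ 2 ≤ (1/2 : ℝ) ^ 2 * 1 := by
            apply mul_le_mul _ h3 (sq_nonneg _) (by norm_num)
            rwa [Real.norm_eq_abs]
        _ = 1 / 4 := by norm_num
    push_cast
    linarith

theorem lattice_point_in_ball (n : ℕ) (hn : 1 ≤ n)
    (v : Fin n → EuclideanSpace ℝ (Fin n)) (hli : LinearIndependent ℝ v)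
    (hv : ∀ i, ‖v i‖ ≤ 1) :
    ∀ (c : EuclideanSpace ℝ (Fin n)) (r : ℝ), Real.sqrt n / 2 ≤ r →
      ∃ k : Fin n → ℤ, ‖(∑ i, (k i : ℝ) • v i) - c‖ ≤ r := by
  intro c r hr
  haveI : Nonempty (Fin n) := ⟨⟨0, hn⟩⟩
  have hspan : Submodule.span ℝ (Set.range v) = ⊤ := by
    apply LinearIndependent.span_eq_top_of_card_eq_finrank hli
    simp [finrank_euclideanSpace]
  obtain ⟨k, hk⟩ := lattice_aux n v hv c (hspan ▸ Submodule.mem_top)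
  refine ⟨k, ?_⟩
  have h1 : ‖(∑ i, (k i : ℝ) • v i) - c‖ ≤ Real.sqrt ((n : ℝ) / 4) := by
    rw [Real.le_sqrt (norm_nonneg _) (by positivity)]
    exact hk
  have h2 : Real.sqrt ((n : ℝ) / 4) = Real.sqrt n / 2 := by
    rw [Real.sqrt_div (by positivity : (0:ℝ) ≤ (n:ℝ)),
      show (4:ℝ) = 2 ^ 2 by norm_num, Real.sqrt_sq (by norm_num : (0:ℝ) ≤ 2)]
  linarith [h1, h2 ▸ h1]
end
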